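/- Suppose A ⋈^θ I is commutative, A admits a character, and the closure of θ(A)I equals I. Then the Jacobson radical of A ⋈^θ I equals rad(A) × rad(I), where rad denotes the intersection of kernels of all characters. In particular, A ⋈^θ I is semisimple if and only if both A and I are semisimple. -/
import Mathlib


noncomputable def amul {A B : Type*} [NonUnitalNormedRing A] [NormedSpace ℂ A]
    [NonUnitalNormedRing B] [NormedSpace ℂ B]
    (θ : A →L[ℂ] B) {I : Submodule ℂ B}
    (hIl : ∀ b i : B, i ∈ I → b * i ∈ I) (hIr : ∀ b i : B, i ∈ I → i * b ∈ I)
    (x y : A × I) : A × I :=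
  (x.1 * y.1,
    ⟨θ x.1 * (y.2 : B) + (x.2 : B) * θ y.1 + (x.2 : B) * (y.2 : B),
      I.add_mem (I.add_mem (hIl _ _ y.2.2) (hIr _ _ x.2.2)) (hIr _ _ x.2.2)⟩)

/-- The radical of a (not necessarily unital) normed algebra `C` with multiplication `m`,
as the intersection of the kernels of all characters (nonzero continuous multiplicative
linear functionals). -/
def radSet (C : Type*) [NormedAddCommGroup C] [Module ℂ C] (m : C → C → C) : Set C :=
  {x : C | ∀ χ : C → ℂ,
    (IsLinearMap ℂ χ ∧ Continuous χ ∧ (∀ u v : C, χ (m u v) = χ u * χ v) ∧ χ ≠ 0) →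
    χ x = 0}

/-- If `A ⋈^θ I` is commutative, `A` admits a character and the closure of `θ(A)I` is `I`,
then `rad(A ⋈^θ I) = rad(A) × rad(I)`; in particular `A ⋈^θ I` is semisimple if and only if
both `A` and `I` are semisimple. -/
theorem amalgamation_radical {A B : Type*} [NonUnitalNormedRing A]
    [NormedSpace ℂ A] [IsScalarTower ℂ A A] [SMulCommClass ℂ A A] [CompleteSpace A]
    [NonUnitalNormedRing B] [NormedSpace ℂ B]
    [IsScalarTower ℂ B B] [SMulCommClass ℂ B B] [CompleteSpace B]
    (θ : A →L[ℂ] B) (hθ : ∀ x y : A, θ (x * y) = θ x * θ y)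
    (I : Submodule ℂ B) (hIc : IsClosed (I : Set B))
    (hIl : ∀ b i : B, i ∈ I → b * i ∈ I) (hIr : ∀ b i : B, i ∈ I → i * b ∈ I)
    (hcomm : ∀ x y : A × I, amul θ hIl hIr x y = amul θ hIl hIr y x)
    (hchar : ∃ φ : A → ℂ, IsLinearMap ℂ φ ∧ Continuous φ ∧
      (∀ a a' : A, φ (a * a') = φ a * φ a') ∧ φ ≠ 0)
    (hspan : closure ((Submodule.span ℂ {b : B | ∃ a : A, ∃ i ∈ I, b = θ a * i} :
        Submodule ℂ B) : Set B) = (I : Set B)) :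
    radSet (A × I) (amul θ hIl hIr)
        = {x : A × I | x.1 ∈ radSet A (fun a a' => a * a') ∧
            x.2 ∈ radSet I (fun i j => ⟨(i : B) * (j : B), hIr _ _ i.2⟩)} ∧
    ((radSet (A × I) (amul θ hIl hIr) = {0}) ↔
      (radSet A (fun a a' => a * a') = {0} ∧
       radSet I (fun i j => ⟨(i : B) * (j : B), hIr _ _ i.2⟩) = {0})) := by

  classical
  -- consequences of commutativity of the amalgamation
  have cI : ∀ x ∈ I, ∀ y ∈ I, x * y = y * x := by
    intro x hx y hy
    have h := congrArg (fun p : A × I => (p.2 : B)) (hcomm (0, ⟨x, hx⟩) (0, ⟨y, hy⟩))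
    simpa [amul] using h
  have cAI : ∀ (a : A), ∀ x ∈ I, θ a * x = x * θ a := by
    intro a x hx
    have h := congrArg (fun p : A × I => (p.2 : B)) (hcomm (a, 0) (0, ⟨x, hx⟩))
    simpa [amul] using h
  have hset : radSet (A × I) (amul θ hIl hIr)
      = {x : A × I | x.1 ∈ radSet A (fun a a' => a * a') ∧
          x.2 ∈ radSet I (fun i j => ⟨(i : B) * (j : B), hIr _ _ i.2⟩)} := by
    ext p
    obtain ⟨a, i⟩ := p
    simp only [radSet, Set.mem_setOf_eq]
    constructor
    · intro h
      have hA : ∀ φ : A → ℂ, (IsLinearMap ℂ φ ∧ Continuous φ ∧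
          (∀ u v : A, φ (u * v) = φ u * φ v) ∧ φ ≠ 0) → φ a = 0 := by
        rintro φ ⟨hlin, hcont, hmul, hne⟩
        refine h (fun p => φ p.1) ⟨⟨fun x y => hlin.map_add _ _, fun c x => hlin.map_smul _ _⟩,
          hcont.comp continuous_fst, fun u v => hmul u.1 v.1, ?_⟩
        intro h0
        apply hne
        funext x
        simpa using congrFun h0 (x, 0)
      refine ⟨hA, ?_⟩
      rintro ψ ⟨hlin, hcont, hmul, hne⟩
      have ψcongr : ∀ (x y : B) (hx : x ∈ I) (hy : y ∈ I), x = y →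
          ψ ⟨x, hx⟩ = ψ ⟨y, hy⟩ := by
        intro x y hx hy hxy; subst hxy; rfl
      have ψmul : ∀ (x y : B) (hx : x ∈ I) (hy : y ∈ I) (hxy : x * y ∈ I),
          ψ ⟨x * y, hxy⟩ = ψ ⟨x, hx⟩ * ψ ⟨y, hy⟩ := by
        intro x y hx hy hxy
        exact hmul ⟨x, hx⟩ ⟨y, hy⟩
      have ψadd : ∀ (x y : B) (hx : x ∈ I) (hy : y ∈ I) (hxy : x + y ∈ I),
          ψ ⟨x + y, hxy⟩ = ψ ⟨x, hx⟩ + ψ ⟨y, hy⟩ := by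
        intro x y hx hy hxy
        have h1 : (⟨x + y, hxy⟩ : I) = ⟨x, hx⟩ + ⟨y, hy⟩ := by
          apply Subtype.ext; simp
        rw [h1]; exact hlin.map_add _ _
      obtain ⟨j0, hj0⟩ : ∃ j : I, ψ j ≠ 0 := by
        by_contra hc
        push_neg at hc
        exact hne (funext fun j => hc j)
      set i1 : I := (ψ j0)⁻¹ • j0 with hi1def
      have hψ1 : ψ i1 = 1 := by
        rw [hi1def, hlin.map_smul]
        simp only [smul_eq_mul]
        field_simp
      set lam : A → ℂ := fun x => ψ ⟨θ x * (i1 : B), hIl _ _ i1.2⟩ with hlamdef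
      have key : ∀ (x : A) (y : B) (hy : y ∈ I),
          ψ ⟨θ x * y, hIl _ _ hy⟩ = lam x * ψ ⟨y, hy⟩ := by
        intro x y hy
        have e1 : (θ x * y) * (i1 : B) = (θ x * (i1 : B)) * y := by
          rw [mul_assoc, mul_assoc, cI _ hy _ i1.2]
        calc ψ ⟨θ x * y, hIl _ _ hy⟩
            = ψ ⟨θ x * y, hIl _ _ hy⟩ * ψ i1 := by rw [hψ1, mul_one]
          _ = ψ ⟨(θ x * y) * (i1 : B), hIr _ _ (hIl _ _ hy)⟩ :=
              (ψmul _ _ (hIl _ _ hy) i1.2 _).symm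
          _ = ψ ⟨(θ x * (i1 : B)) * y, hIr _ _ (hIl _ _ i1.2)⟩ := ψcongr _ _ _ _ e1
          _ = lam x * ψ ⟨y, hy⟩ := by
              rw [ψmul _ _ (hIl _ _ i1.2) hy]
      have lmul : ∀ x y : A, lam (x * y) = lam x * lam y := by
        intro x y
        have e : θ (x * y) * (i1 : B) = θ x * (θ y * (i1 : B)) := by
          rw [hθ, mul_assoc]
        have h1 : lam (x * y) = ψ ⟨θ x * (θ y * (i1 : B)), hIl _ _ (hIl _ _ i1.2)⟩ := by
          rw [hlamdef]
          exact ψcongr _ _ _ _ e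
        rw [h1, key x _ (hIl _ _ i1.2)]
      have lamadd : ∀ x y : A, lam (x + y) = lam x + lam y := by
        intro x y
        have e : θ (x + y) * (i1 : B) = θ x * (i1 : B) + θ y * (i1 : B) := by
          rw [map_add, add_mul]
        have h1 : lam (x + y)
            = ψ ⟨θ x * (i1 : B) + θ y * (i1 : B),
                I.add_mem (hIl _ _ i1.2) (hIl _ _ i1.2)⟩ := by
          rw [hlamdef]
          exact ψcongr _ _ _ _ e
        rw [h1, ψadd _ _ (hIl _ _ i1.2) (hIl _ _ i1.2)]
      have lamsmul : ∀ (c : ℂ) (x : A), lam (c • x) = c • lam x := by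
        intro c x
        have e : θ (c • x) * (i1 : B) = c • (θ x * (i1 : B)) := by
          rw [map_smul, smul_mul_assoc]
        have h1 : lam (c • x) = ψ ⟨c • (θ x * (i1 : B)), I.smul_mem c (hIl _ _ i1.2)⟩ := by
          rw [hlamdef]
          exact ψcongr _ _ _ _ e
        have h2 : (⟨c • (θ x * (i1 : B)), I.smul_mem c (hIl _ _ i1.2)⟩ : I)
            = c • (⟨θ x * (i1 : B), hIl _ _ i1.2⟩ : I) := by
          apply Subtype.ext; simp
        rw [h1, h2, hlin.map_smul]
      have llin : IsLinearMap ℂ lam := ⟨lamadd, lamsmul⟩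
      have lcont : Continuous lam := by
        rw [hlamdef]
        exact hcont.comp (Continuous.subtype_mk (θ.continuous.mul continuous_const) _)
      by_cases hl0 : lam = (0 : A → ℂ)
      · -- then ψ vanishes on θ(A)I, hence on I : contradiction
        exfalso
        set K : Submodule ℂ B := (LinearMap.ker (hlin.mk' ψ)).map I.subtype with hKdef
        have hKmem : ∀ x : B, x ∈ K ↔ ∃ hx : x ∈ I, ψ ⟨x, hx⟩ = 0 := by
          intro x
          constructor
          · rintro ⟨j, hj, rfl⟩
            exact ⟨j.2, hj⟩
          · rintro ⟨hx, hx0⟩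
            exact ⟨⟨x, hx⟩, hx0, rfl⟩
        have hKc : IsClosed (K : Set B) := by
          have h1 : IsClosed {j : I | ψ j = 0} := isClosed_eq hcont continuous_const
          have h2 : (K : Set B) = Subtype.val '' {j : I | ψ j = 0} := by
            ext x
            simp only [Set.mem_image, SetLike.mem_coe, hKmem, Set.mem_setOf_eq]
            constructor
            · rintro ⟨hx, h0⟩; exact ⟨⟨x, hx⟩, h0, rfl⟩
            · rintro ⟨j, h0, rfl⟩; exact ⟨j.2, h0⟩
          rw [h2]
          exact hIc.isClosedEmbedding_subtypeVal.isClosedMap _ h1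
        have hle : Submodule.span ℂ {b : B | ∃ a : A, ∃ i ∈ I, b = θ a * i} ≤ K := by
          rw [Submodule.span_le]
          rintro x ⟨a', i', hi', rfl⟩
          rw [SetLike.mem_coe, hKmem]
          refine ⟨hIl _ _ hi', ?_⟩
          rw [key a' i' hi', congrFun hl0 a']
          simp
        have hsub : (I : Set B) ⊆ (K : Set B) := by
          rw [← hspan]
          exact closure_minimal hle hKc
        apply hne
        funext j
        obtain ⟨hx, h0⟩ := (hKmem (j : B)).mp (hsub j.2)
        exact h0
      · -- extend ψ to a character of the amalgamation
        have hmult : ∀ u v : A × I,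
            lam ((amul θ hIl hIr u v).1) + ψ ((amul θ hIl hIr u v).2)
              = (lam u.1 + ψ u.2) * (lam v.1 + ψ v.2) := by
          intro u v
          have e2 : ψ ((amul θ hIl hIr u v).2) =
              ψ ⟨θ u.1 * (v.2 : B), hIl _ _ v.2.2⟩ +
              ψ ⟨(u.2 : B) * θ v.1, hIr _ _ u.2.2⟩ +
              ψ ⟨(u.2 : B) * (v.2 : B), hIr _ _ u.2.2⟩ := by
            have h1 := ψadd (θ u.1 * (v.2 : B) + (u.2 : B) * θ v.1) ((u.2 : B) * (v.2 : B))
              (I.add_mem (hIl _ _ v.2.2) (hIr _ _ u.2.2)) (hIr _ _ u.2.2)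
              (I.add_mem (I.add_mem (hIl _ _ v.2.2) (hIr _ _ u.2.2)) (hIr _ _ u.2.2))
            have h2 := ψadd (θ u.1 * (v.2 : B)) ((u.2 : B) * θ v.1)
              (hIl _ _ v.2.2) (hIr _ _ u.2.2)
              (I.add_mem (hIl _ _ v.2.2) (hIr _ _ u.2.2))
            exact h1.trans (by rw [h2])
          have k1 : ψ ⟨θ u.1 * (v.2 : B), hIl _ _ v.2.2⟩ = lam u.1 * ψ v.2 :=
            key u.1 (v.2 : B) v.2.2
          have k2 : ψ ⟨(u.2 : B) * θ v.1, hIr _ _ u.2.2⟩ = lam v.1 * ψ u.2 := by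
            rw [ψcongr _ (θ v.1 * (u.2 : B)) _ (hIl _ _ u.2.2) (cAI v.1 _ u.2.2).symm]
            exact key v.1 (u.2 : B) u.2.2
          have k3 : ψ ⟨(u.2 : B) * (v.2 : B), hIr _ _ u.2.2⟩ = ψ u.2 * ψ v.2 :=
            ψmul _ _ u.2.2 v.2.2 _
          have e1 : lam ((amul θ hIl hIr u v).1) = lam u.1 * lam v.1 := lmul u.1 v.1
          rw [e1, e2, k1, k2, k3]
          ring
        have hz : lam a + ψ i = 0 := by
          refine h (fun p => lam p.1 + ψ p.2) ⟨⟨fun x y => ?_, fun c x => ?_⟩, ?_, hmult, ?_⟩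
          · show lam (x.1 + y.1) + ψ (x.2 + y.2) = _
            rw [lamadd, hlin.map_add]; ring
          · show lam (c • x.1) + ψ (c • x.2) = _
            rw [lamsmul, hlin.map_smul]
            simp [smul_eq_mul, mul_add]
          · exact (lcont.comp continuous_fst).add (hcont.comp continuous_snd)
          · intro h0
            have h1 := congrFun h0 ((0 : A), j0)
            simp only [Pi.zero_apply] at h1
            rw [llin.map_zero, zero_add] at h1
            exact hj0 h1
        have hla : lam a = 0 := hA lam ⟨llin, lcont, lmul, hl0⟩
        rw [hla, zero_add] at hz
        exact hz
    · rintro ⟨ha, hi⟩ χ ⟨hlin, hcont, hmul, hne⟩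
      have hsplit : χ (a, i) = χ (a, 0) + χ (0, i) := by
        have h1 : ((a, (0 : I)) : A × I) + ((0 : A), i) = (a, i) := by
          simp
        rw [← h1, hlin.map_add]
      have h1 : χ (a, 0) = 0 := by
        have φmul : ∀ u v : A, χ (u * v, 0) = χ (u, 0) * χ (v, 0) := by
          intro u v
          have e : amul θ hIl hIr (u, 0) (v, 0) = (u * v, 0) := by
            simp [amul, Prod.ext_iff, Subtype.ext_iff]
          have := hmul (u, 0) (v, 0)
          rw [e] at this
          exact this
        by_cases hφ0 : (fun x : A => χ (x, 0)) = 0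
        · exact congrFun hφ0 a
        · refine ha (fun x : A => χ (x, 0)) ⟨⟨fun x y => ?_, fun c x => ?_⟩, ?_, φmul, hφ0⟩
          · have e : ((x + y, (0 : I)) : A × I) = (x, 0) + (y, 0) := by simp
            rw [e, hlin.map_add]
          · have e : ((c • x, (0 : I)) : A × I) = c • ((x, (0 : I)) : A × I) := by simp
            rw [e, hlin.map_smul]
          · exact hcont.comp (continuous_id.prodMk continuous_const)
      have h2 : χ (0, i) = 0 := by
        have ψmul' : ∀ u v : I, χ (0, ⟨(u : B) * (v : B), hIr _ _ u.2⟩) = χ (0, u) * χ (0, v) := by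
          intro u v
          have e : amul θ hIl hIr (0, u) (0, v) = ((0 : A), ⟨(u : B) * (v : B), hIr _ _ u.2⟩) := by
            simp [amul, Prod.ext_iff, Subtype.ext_iff]
          have := hmul (0, u) (0, v)
          rw [e] at this
          exact this
        by_cases hψ0 : (fun j : I => χ (0, j)) = 0
        · exact congrFun hψ0 i
        · refine hi (fun j : I => χ (0, j)) ⟨⟨fun x y => ?_, fun c x => ?_⟩, ?_, ψmul', hψ0⟩
          · have e : (((0 : A), x + y) : A × I) = (0, x) + (0, y) := by simp
            rw [e, hlin.map_add]
          · have e : (((0 : A), c • x) : A × I) = c • (((0 : A), x) : A × I) := by simp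
            rw [e, hlin.map_smul]
          · exact hcont.comp (continuous_const.prodMk continuous_id)
      rw [hsplit, h1, h2, add_zero]
  refine ⟨hset, ?_⟩
  have h0A : (0 : A) ∈ radSet A (fun a a' => a * a') := fun χ hχ => hχ.1.map_zero
  have h0I : (0 : I) ∈ radSet I (fun i j => ⟨(i : B) * (j : B), hIr _ _ i.2⟩) :=
    fun χ hχ => hχ.1.map_zero
  constructor
  · intro hr
    constructor
    · ext x
      simp only [Set.mem_singleton_iff]
      constructor
      · intro hx
        have hm : ((x, (0 : I)) : A × I) ∈ radSet (A × I) (amul θ hIl hIr) := by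
          rw [hset]; exact ⟨hx, h0I⟩
        rw [hr, Set.mem_singleton_iff, Prod.ext_iff] at hm
        exact hm.1
      · rintro rfl; exact h0A
    · ext x
      simp only [Set.mem_singleton_iff]
      constructor
      · intro hx
        have hm : (((0 : A), x) : A × I) ∈ radSet (A × I) (amul θ hIl hIr) := by
          rw [hset]; exact ⟨h0A, hx⟩
        rw [hr, Set.mem_singleton_iff, Prod.ext_iff] at hm
        exact hm.2
      · rintro rfl; exact h0I
  · rintro ⟨hA0, hI0⟩
    rw [hset, hA0, hI0]
    ext ⟨x, y⟩
    simp [Prod.ext_iff]
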